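/- arXiv:2511.07792 — 3 statements merged into one kernel-verified Lean document; each statement's English description precedes it below -/
import Mathlib

section
/- Let K be a field complete with respect to a nontrivial nonarchimedean absolute value, and let E be a metrizable topological K-vector space. Let o = {c ∈ K : |c| ≤ 1} be the unit ball of K. If L ⊆ E is an o-submodule (that is, 0 ∈ L, L is closed under addition, and c • L ⊆ L for every c ∈ K with |c| ≤ 1) which absorbs every von Neumann bounded subset of E, then L is a neighborhood of 0 in E. (This is part (i) of the paper's lemma stating that for metrizable W the counit W^{bt} → W is an isomorphism, i.e. the topology of bornivorous o-submodules of the von Neumann bornology recovers the original topology.) -/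
/-!
Fix `c : K` with `1 < ‖c‖`. If `L` is not a neighbourhood of `0`, neither is any `c ^ n • L`,
so first countability yields `x n → 0` with `x n ∉ c ^ n • L`. The range of `x` is bounded,
hence contained in some `a • L`; as `L` is balanced, `a • L ⊆ c ^ n • L` once `‖a‖ ≤ ‖c‖ ^ n`,
which is absurd.
-/

open Pointwise Filter Topology Set

theorem Filter.exists_tendsto_forall_notMem {α : Type*} {f : Filter α} [f.IsCountablyGenerated]
    {s : ℕ → Set α} (hs : ∀ n, s n ∉ f) : ∃ x : ℕ → α, Tendsto x atTop f ∧ ∀ n, x n ∉ s n := by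
  obtain ⟨U, hU⟩ := f.exists_antitone_basis
  have hUs : ∀ n, ∃ x ∈ U n, x ∉ s n := fun n ↦
    not_subset.mp fun h ↦ hs n (mem_of_superset (hU.mem n) h)
  choose x hxU hxs using hUs
  exact ⟨x, hU.tendsto hxU, hxs⟩

theorem Balanced.mem_nhds_zero_of_bornivorous {K E : Type*} [NontriviallyNormedField K]
    [AddCommGroup E] [Module K E] [TopologicalSpace E] [IsTopologicalAddGroup E]
    [ContinuousSMul K E] [FirstCountableTopology E] {L : Set E} (hL : Balanced K L)
    (habs : ∀ B : Set E, Bornology.IsVonNBounded K B → ∃ a : K, B ⊆ a • L) : L ∈ 𝓝 0 := by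
  by_contra hL0
  obtain ⟨c, hc⟩ := NormedField.exists_one_lt_norm K
  have hc0 : c ≠ 0 := norm_pos_iff.mp (zero_lt_one.trans hc)
  obtain ⟨x, hx0, hxL⟩ := exists_tendsto_forall_notMem (f := 𝓝 (0 : E)) (s := (c ^ · • L))
    fun n h ↦ hL0 ((set_smul_mem_nhds_zero_iff (pow_ne_zero n hc0)).mp h)
  obtain ⟨a, ha⟩ := habs _ (hx0.isVonNBounded_range K)
  obtain ⟨n, hn⟩ := pow_unbounded_of_one_lt ‖a‖ hc
  exact hxL n (hL.smul_mono (by rw [norm_pow]; exact hn.le) (ha (mem_range_self n)))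

theorem bornivorous_lattice_mem_nhds_zero_general
    {K : Type*} [NontriviallyNormedField K]
    {E : Type*} [AddCommGroup E] [Module K E] [TopologicalSpace E]
    [IsTopologicalAddGroup E] [ContinuousSMul K E] [TopologicalSpace.MetrizableSpace E]
    (L : Set E)
    (hsmul : ∀ c : K, ‖c‖ ≤ 1 → ∀ x ∈ L, c • x ∈ L)
    (habs : ∀ B : Set E, Bornology.IsVonNBounded K B → ∃ c : K, c ≠ 0 ∧ B ⊆ c • L) :
    L ∈ nhds (0 : E) :=
  (balanced_iff_smul_mem.mpr hsmul).mem_nhds_zero_of_bornivorous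
    fun B hB ↦ (habs B hB).imp fun _ ↦ And.right

/-- Let `K` be a field complete with respect to a nontrivial
nonarchimedean absolute value, with unit ball `o = {c : ‖c‖ ≤ 1}`, and let `E` be a
metrizable topological `K`-vector space.  If `L ⊆ E` is an `o`-submodule
(`0 ∈ L`, closed under addition, stable under scalars of norm at most `1`)
which absorbs every von Neumann bounded subset of `E` (in the sense that for every
bounded `B` there is a nonzero scalar `c` with `B ⊆ c • L`), then `L` is a
neighbourhood of `0` in `E`. -/
theorem bornivorous_lattice_mem_nhds_zero
    {K : Type*} [NontriviallyNormedField K] [CompleteSpace K] [IsUltrametricDist K]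
    {E : Type*} [AddCommGroup E] [Module K E] [TopologicalSpace E]
    [IsTopologicalAddGroup E] [ContinuousSMul K E] [TopologicalSpace.MetrizableSpace E]
    (L : Set E)
    (h0 : (0 : E) ∈ L)
    (hadd : ∀ x ∈ L, ∀ y ∈ L, x + y ∈ L)
    (hsmul : ∀ c : K, ‖c‖ ≤ 1 → ∀ x ∈ L, c • x ∈ L)
    (habs : ∀ B : Set E, Bornology.IsVonNBounded K B → ∃ c : K, c ≠ 0 ∧ B ⊆ c • L) :
    L ∈ nhds (0 : E) :=
  bornivorous_lattice_mem_nhds_zero_general L hsmul habs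
end

section
/- Let K be a field complete with respect to a nontrivial nonarchimedean absolute value, and let E be a complete metrizable topological K-vector space (a K-Fréchet space). Then for every countable family (B_n)_{n ∈ ℕ} of von Neumann bounded subsets of E there exists a von Neumann bounded subset B' of E which absorbs every B_n; that is, for each n there is a nonzero scalar c_n ∈ K with B_n ⊆ c_n • B'. Equivalently, the preorder of von Neumann bounded subsets of E ordered by absorption is countably directed (ℵ₁-filtered), i.e. the von Neumann bornology of a Fréchet space is metrizable in the bornological sense. (This is the part of the paper's Lemma on Fréchet spaces proved there, attributed to Mackey: one may take B' to be generated by a suitable sum ∑_n λ_n B_n with λ_n B_n contained in the n-th member of a decreasing fundamental system of lattice neighborhoods of 0.) -/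
/-!
Rescale each `B n` into the `n`-th member `V n` of a countable antitone basis of neighbourhoods
of `0` (Mackey's trick). The rescaled sets shrink to `0`, so their union is bounded: any
neighbourhood of `0` has a balanced part containing all but finitely many of them.
-/

open Pointwise Filter Topology

namespace Bornology.IsVonNBounded

theorem smul_set {𝕜 E : Type*} [NormedField 𝕜] [AddCommGroup E] [Module 𝕜 E]
    [TopologicalSpace E] {S : Set E} (hS : IsVonNBounded 𝕜 S) (c : 𝕜) :
    IsVonNBounded 𝕜 (c • S) := by
  rw [isVonNBounded_iff_tendsto_smallSets_nhds] at hS ⊢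
  have hc : Tendsto (· * c) (𝓝 (0 : 𝕜)) (𝓝 0) := by
    simpa using (tendsto_id (x := 𝓝 (0 : 𝕜))).mul_const c
  simpa only [Function.comp_def, smul_smul] using hS.comp hc

theorem exists_ne_zero_subset_smul {𝕜 E : Type*} [NontriviallyNormedField 𝕜] [AddCommGroup E]
    [Module 𝕜 E] [TopologicalSpace E] {S U : Set E} (hS : IsVonNBounded 𝕜 S)
    (hU : U ∈ 𝓝 (0 : E)) : ∃ c : 𝕜, c ≠ 0 ∧ S ⊆ c • U := by
  obtain ⟨c, hcS, hc⟩ := ((hS hU).eventually.and (eventually_ne_cobounded 0)).exists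
  exact ⟨c, hc, hcS⟩

end Bornology.IsVonNBounded

theorem isVonNBounded_iUnion_of_tendsto_smallSets {𝕜 E : Type*} [NontriviallyNormedField 𝕜]
    [AddCommGroup E] [Module 𝕜 E] [TopologicalSpace E] [ContinuousSMul 𝕜 E] {A : ℕ → Set E}
    (hA : ∀ n, Bornology.IsVonNBounded 𝕜 (A n)) (hlim : Tendsto A atTop (𝓝 0).smallSets) :
    Bornology.IsVonNBounded 𝕜 (⋃ n, A n) := by
  intro U hU
  obtain ⟨N, hN⟩ :=
    eventually_atTop.1 (tendsto_smallSets_iff.1 hlim _ (balancedCore_mem_nhds_zero (𝕜 := 𝕜) hU))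
  have hsplit : (⋃ n, A n) ⊆ (⋃ n ∈ Set.Iio N, A n) ∪ balancedCore 𝕜 U := by
    refine Set.iUnion_subset fun n => ?_
    rcases lt_or_ge n N with hn | hn
    · exact Set.subset_union_of_subset_left
        (Set.subset_biUnion_of_mem (u := A) (Set.mem_Iio.2 hn)) _
    · exact Set.subset_union_of_subset_right (hN n hn) _
  refine Absorbs.mono_right (Absorbs.union ?_ ?_) hsplit
  · exact (Set.finite_Iio N).absorbs_biUnion.2 fun n _ => hA n hU
  · exact (balancedCore_balanced U).absorbs_self.mono_left (balancedCore_subset U)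

theorem exists_vonNBounded_absorbing_of_countable_general
    {K : Type*} [NontriviallyNormedField K]
    {E : Type*} [AddCommGroup E] [Module K E] [UniformSpace E]
    [ContinuousSMul K E] [TopologicalSpace.MetrizableSpace E]
    (B : ℕ → Set E) (hB : ∀ n, Bornology.IsVonNBounded K (B n)) :
    ∃ B' : Set E, Bornology.IsVonNBounded K B' ∧
      ∀ n, ∃ c : K, c ≠ 0 ∧ B n ⊆ c • B' := by
  obtain ⟨V, hV⟩ := (𝓝 (0 : E)).exists_antitone_basis
  choose c hc0 hcB using fun n => (hB n).exists_ne_zero_subset_smul (hV.mem n)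
  refine ⟨⋃ n, (c n)⁻¹ • B n, isVonNBounded_iUnion_of_tendsto_smallSets
    (fun n => (hB n).smul_set _) ?_, fun n => ⟨c n, hc0 n, ?_⟩⟩
  · exact hV.tendsto_smallSets.smallSets_mono
      (Eventually.of_forall fun n => (Set.subset_smul_set_iff₀ (hc0 n)).1 (hcB n))
  · exact (Set.subset_smul_set_iff₀ (hc0 n)).2 (Set.subset_iUnion (fun m => (c m)⁻¹ • B m) n)

/-- Mackey; cf. the paper's Lemma on Fréchet spaces.  Let `K` be a field
complete with respect to a nontrivial nonarchimedean absolute value and let `E` be a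
complete metrizable topological `K`-vector space (a `K`-Fréchet space).  Then for every
countable family `(B n)` of von Neumann bounded subsets of `E` there is a von Neumann
bounded subset `B'` of `E` absorbing every `B n`: for each `n` there is a nonzero scalar
`c : K` with `B n ⊆ c • B'`.  In other words the von Neumann bornology of a Fréchet
space is countably directed under absorption (metrizable in the bornological sense). -/
theorem exists_vonNBounded_absorbing_of_countable
    {K : Type*} [NontriviallyNormedField K] [CompleteSpace K] [IsUltrametricDist K]
    {E : Type*} [AddCommGroup E] [Module K E] [UniformSpace E] [IsUniformAddGroup E]
    [ContinuousSMul K E] [TopologicalSpace.MetrizableSpace E] [CompleteSpace E]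
    (B : ℕ → Set E) (hB : ∀ n, Bornology.IsVonNBounded K (B n)) :
    ∃ B' : Set E, Bornology.IsVonNBounded K B' ∧
      ∀ n, ∃ c : K, c ≠ 0 ∧ B n ⊆ c • B' :=
  exists_vonNBounded_absorbing_of_countable_general B hB
end

section
/- Let K be a normed field and let S and S' be sets (regarded as discrete topological spaces). For φ ∈ c₀(S) and ψ ∈ c₀(S'), the function φ ⊠ ψ : S × S' → K defined by (φ ⊠ ψ)(s, s') = φ(s)·ψ(s') lies in c₀(S × S') and satisfies ‖φ ⊠ ψ‖ = ‖φ‖·‖ψ‖. Moreover, the K-linear span of the set {φ ⊠ ψ : φ ∈ c₀(S), ψ ∈ c₀(S')} is dense in c₀(S × S'). (This is the normed-space content of the paper's isomorphism c₀(S) ⊗̂_K c₀(S') ≅ c₀(S × S').) -/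
/-!
The exterior product vanishes at infinity because the cocompact filter of `S × S'` is the
coproduct of the cocompact filters of `S` and `S'`, and its sup norm is `‖φ‖ * ‖ψ‖` because the
norm of `K` is multiplicative. On a discrete space, `f ∈ c₀` is within `ε` of its restriction to
the finite set `{‖f‖ ≥ ε / 2}`, a finite sum of point masses, and the point mass at `(s, s')` is
the exterior product of point masses at `s` and `s'`.
-/

open scoped ZeroAtInfty

open Filter

namespace ZeroAtInftyContinuousMap

variable {α β K : Type*} [TopologicalSpace α] [TopologicalSpace β]

section Norm

variable [SeminormedAddCommGroup K]

theorem norm_apply_le (f : C₀(α, K)) (x : α) : ‖f x‖ ≤ ‖f‖ :=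
  f.toBCF.norm_coe_le_norm x

theorem norm_le_of_forall {f : C₀(α, K)} {C : ℝ} (hC : 0 ≤ C) (h : ∀ x, ‖f x‖ ≤ C) :
    ‖f‖ ≤ C :=
  (BoundedContinuousFunction.norm_le hC).2 h

theorem mul_norm_le_of_forall {f : C₀(α, K)} {a C : ℝ} (ha : 0 ≤ a) (hC : 0 ≤ C)
    (h : ∀ x, a * ‖f x‖ ≤ C) : a * ‖f‖ ≤ C := by
  rcases ha.eq_or_lt with rfl | ha
  · simpa using hC
  · rw [← le_div_iff₀' ha]
    exact norm_le_of_forall (by positivity) fun x => (le_div_iff₀' ha).2 (h x)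

theorem norm_mul_norm_le_of_forall {f : C₀(α, K)} {g : C₀(β, K)} {C : ℝ} (hC : 0 ≤ C)
    (h : ∀ x y, ‖f x‖ * ‖g y‖ ≤ C) : ‖f‖ * ‖g‖ ≤ C := by
  have hfg : ∀ x, ‖f x‖ * ‖g‖ ≤ C := fun x => mul_norm_le_of_forall (norm_nonneg _) hC (h x)
  rw [mul_comm]
  exact mul_norm_le_of_forall (norm_nonneg _) hC fun x => (mul_comm _ _).trans_le (hfg x)

end Norm

section ExtProd

def extProd [MulZeroClass K] [TopologicalSpace K] [ContinuousMul K]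
    (f : C₀(α, K)) (g : C₀(β, K)) : C₀(α × β, K) where
  toFun p := f p.1 * g p.2
  continuous_toFun := by fun_prop
  zero_at_infty' := tendsto_mul_cocompact_nhds_zero f.continuous g.continuous
    f.zero_at_infty' g.zero_at_infty'

@[simp]
theorem extProd_apply [MulZeroClass K] [TopologicalSpace K] [ContinuousMul K]
    (f : C₀(α, K)) (g : C₀(β, K)) (p : α × β) : extProd f g p = f p.1 * g p.2 :=
  rfl

theorem norm_extProd [SeminormedRing K] [NormMulClass K] (f : C₀(α, K)) (g : C₀(β, K)) :
    ‖extProd f g‖ = ‖f‖ * ‖g‖ := by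
  refine le_antisymm (norm_le_of_forall (by positivity) fun p => ?_)
    (norm_mul_norm_le_of_forall (norm_nonneg _) fun x y => ?_)
  · rw [extProd_apply, norm_mul]
    exact mul_le_mul (norm_apply_le f _) (norm_apply_le g _) (norm_nonneg _) (norm_nonneg _)
  · simpa using norm_apply_le (extProd f g) (x, y)

end ExtProd

theorem sum_apply [TopologicalSpace K] [AddCommMonoid K] [ContinuousAdd K] {ι : Type*}
    (s : Finset ι) (f : ι → C₀(α, K)) (x : α) : (∑ i ∈ s, f i) x = ∑ i ∈ s, f i x := by
  induction s using Finset.cons_induction with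
  | empty => rfl
  | cons i s hi ih => simp [Finset.sum_cons, ih]

section Discrete

variable [DiscreteTopology α]

theorem finite_setOf_le_norm [SeminormedAddCommGroup K] (f : C₀(α, K)) {ε : ℝ} (hε : 0 < ε) :
    {x | ε ≤ ‖f x‖}.Finite := by
  have hf := f.zero_at_infty'
  rw [cocompact_eq_cofinite, (Metric.nhds_basis_ball).tendsto_right_iff] at hf
  simpa using hf ε hε

variable [DecidableEq α]

def single [TopologicalSpace K] [Zero K] (a : α) (c : K) : C₀(α, K) where
  toFun x := if x = a then c else 0
  continuous_toFun := continuous_of_discreteTopology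
  zero_at_infty' := by
    rw [cocompact_eq_cofinite]
    exact tendsto_nhds_of_eventually_eq <| (eventually_cofinite_ne a).mono fun _ hx => if_neg hx

@[simp]
theorem single_apply [TopologicalSpace K] [Zero K] (a : α) (c : K) (x : α) :
    single a c x = if x = a then c else 0 :=
  rfl

theorem sum_single_apply [TopologicalSpace K] [AddCommMonoid K] [ContinuousAdd K]
    (s : Finset α) (f : α → K) (x : α) :
    (∑ a ∈ s, single a (f a)) x = if x ∈ s then f x else 0 := by
  simp [sum_apply]

theorem exists_dist_sum_single_lt [SeminormedAddCommGroup K] (f : C₀(α, K)) {ε : ℝ}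
    (hε : 0 < ε) : ∃ s : Finset α, dist (∑ a ∈ s, single a (f a)) f < ε := by
  have hfin := f.finite_setOf_le_norm (half_pos hε)
  refine ⟨hfin.toFinset, lt_of_le_of_lt ?_ (half_lt_self hε)⟩
  rw [dist_eq_norm]
  refine norm_le_of_forall (half_pos hε).le fun x => ?_
  rw [sub_apply, sum_single_apply]
  split_ifs with hx
  · simpa using (half_pos hε).le
  · simpa using (not_le.1 (mt hfin.mem_toFinset.2 hx)).le

theorem dense_span_range_single [SeminormedRing K] :
    Dense (Submodule.span K (Set.range fun p : α × K => single p.1 p.2) : Set C₀(α, K)) := by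
  refine Metric.dense_iff.2 fun f ε hε => ?_
  obtain ⟨s, hs⟩ := f.exists_dist_sum_single_lt hε
  exact ⟨_, Metric.mem_ball.2 (by rwa [dist_comm] at hs),
    Submodule.sum_mem _ fun a _ => Submodule.subset_span ⟨(a, f a), rfl⟩⟩

end Discrete

end ZeroAtInftyContinuousMap

/-- For a normed field `K` and sets `S`, `S'` (with the discrete
topology): for `φ ∈ c₀(S)` and `ψ ∈ c₀(S')` the exterior product
`φ ⊠ ψ : (s, s') ↦ φ s * ψ s'` lies in `c₀(S × S')` and has norm `‖φ‖ * ‖ψ‖`;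
moreover the `K`-linear span of such exterior products is dense in `c₀(S × S')`.
(This is the normed-space content of `c₀(S) ⊗̂_K c₀(S') ≅ c₀(S × S')`.) -/
theorem zeroAtInfty_extProduct_and_span_dense
    (K : Type*) [NormedField K]
    (S S' : Type*) [TopologicalSpace S] [DiscreteTopology S]
    [TopologicalSpace S'] [DiscreteTopology S'] :
    (∀ (φ : C₀(S, K)) (ψ : C₀(S', K)), ∃ π : C₀(S × S', K),
        (∀ (s : S) (s' : S'), π (s, s') = φ s * ψ s') ∧ ‖π‖ = ‖φ‖ * ‖ψ‖) ∧
    Dense (↑(Submodule.span K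
        {π : C₀(S × S', K) | ∃ (φ : C₀(S, K)) (ψ : C₀(S', K)),
          ∀ (s : S) (s' : S'), π (s, s') = φ s * ψ s'}) : Set C₀(S × S', K)) := by
  classical
  refine ⟨fun φ ψ => ⟨φ.extProd ψ, fun _ _ => rfl, φ.norm_extProd ψ⟩,
    ZeroAtInftyContinuousMap.dense_span_range_single.mono (Submodule.span_mono ?_)⟩
  rintro _ ⟨⟨⟨s, s'⟩, c⟩, rfl⟩
  refine ⟨.single s 1, .single s' c, fun t t' => ?_⟩
  simp only [ZeroAtInftyContinuousMap.single_apply, Prod.mk.injEq, ite_and, ite_mul, one_mul,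
    zero_mul]
end
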